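/- Let A be an N×N non-negative integer matrix and let D be the directed multigraph with vertices 1,…,N having exactly A_{ij} edges from i to j. Then the following are equivalent: (a) the cycles of D are pairwise disjoint, i.e., every pair of different cycles of D have disjoint vertex sets; (b) there exists a non-negative integer d such that for every pair of indices (i,j) the entries (A^n)_{ij} are O(n^d) as n → ∞; (c) the spectral radius of A is at most 1, i.e., every complex eigenvalue of A has absolute value at most 1. -/

import Mathlib

/-!
(a) ⇒ (b): if the cycles are disjoint, every vertex has at most one outgoing edge lying on a
cycle, and an edge lying on no cycle is traversed at most once by any walk. Hence a walk of
length `n` is determined by its start and by the times at which it traverses the edges lying on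
no cycle, so there are at most `(n + 1) ^ |E|` walks of length `n` between two vertices.

(b) ⇒ (c): if `A v = μ v` with `v k ≠ 0`, then `μ ^ n v k = ∑ j, (A ^ n) k j v j = O(n ^ d)`,
which forces `‖μ‖ ≤ 1`.

(c) ⇒ (a): two different cycles `c₁`, `c₂` at `w` give two different closed walks at `w` of
length `m = |c₁| |c₂|`, so `(A ^ m) w w ≥ 2` and `(A ^ (m k)) w w ≥ 2 ^ k`. By Gelfand's formula
`A ^ m` has an eigenvalue of modulus at least `2`; it is `μ ^ m` for an eigenvalue `μ` of `A`.
-/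

/-- A finite directed multigraph: finitely many vertices, finitely many directed edges
(multiple edges between the same ordered pair of vertices are allowed). -/
structure DMGraph where
  V : Type
  E : Type
  fintV : Fintype V
  fintE : Fintype E
  src : E → V
  tgt : E → V

attribute [instance] DMGraph.fintV DMGraph.fintE

namespace DMGraph

/-- `G.Path v w p` : the list of edges `p` is a path from `v` to `w`. -/
inductive Path (G : DMGraph) : G.V → G.V → List G.E → Prop
  | nil (v : G.V) : Path G v v []
  | cons (e : G.E) {w : G.V} {p : List G.E} :
      Path G (G.tgt e) w p → Path G (G.src e) w (e :: p)

/-- A cycle through `w`, written with base point `w`: a nonempty closed path from `w`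
to `w` visiting no vertex twice (the visited vertices are the sources of its edges).
The cycles of `G` are pairwise vertex-disjoint exactly when every vertex `w` carries at
most one such based closed path. -/
def IsCycleAt (G : DMGraph) (w : G.V) (p : List G.E) : Prop :=
  p ≠ [] ∧ G.Path w w p ∧ (p.map G.src).Nodup

end DMGraph

/-- The directed multigraph with vertex set `Fin N` having exactly `A i j` edges
from `i` to `j`. -/
def graphOf {N : ℕ} (A : Matrix (Fin N) (Fin N) ℕ) : DMGraph where
  V := Fin N
  E := Σ i j : Fin N, Fin (A i j)
  fintV := inferInstance
  fintE := @Sigma.instFintype _ _ (fun i => @Sigma.instFintype _ _ (fun j => Fin.fintype (A i j)) _) _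
  src := fun e => e.1
  tgt := fun e => e.2.1

open Finset Filter Asymptotics

namespace DMGraph

variable {G : DMGraph} {u v w : G.V} {e f : G.E} {p q : List G.E}

theorem Path.nil_iff : G.Path u v [] ↔ u = v :=
  ⟨fun h => by cases h; rfl, fun h => h ▸ Path.nil u⟩

theorem Path.cons_iff : G.Path u v (e :: p) ↔ G.src e = u ∧ G.Path (G.tgt e) v p :=
  ⟨fun h => by cases h; exact ⟨rfl, by assumption⟩, fun ⟨h, hp⟩ => h ▸ hp.cons e⟩

theorem Path.append_iff : G.Path u w (p ++ q) ↔ ∃ v, G.Path u v p ∧ G.Path v w q := by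
  induction p generalizing u with
  | nil => simp [Path.nil_iff]
  | cons e p ih => simp [Path.cons_iff, ih, and_assoc]

theorem Path.append (hp : G.Path u v p) (hq : G.Path v w q) : G.Path u w (p ++ q) :=
  Path.append_iff.2 ⟨v, hp, hq⟩

theorem Path.target_unique {v' : G.V} (h : G.Path u v p) (h' : G.Path u v' p) : v = v' := by
  induction h with
  | nil => exact Path.nil_iff.1 h'
  | cons e _ ih => exact ih (Path.cons_iff.1 h').2

-- `v :: q.map G.src` lists the vertices visited by `q`.
theorem Path.exists_nodup (h : G.Path u v p) : ∃ q, G.Path u v q ∧ (v :: q.map G.src).Nodup := by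
  induction h with
  | nil v => exact ⟨[], Path.nil v, by simp⟩
  | @cons e v p _ ih =>
    obtain ⟨q, hq, hnd⟩ := ih
    by_cases hv : G.src e = v
    · exact ⟨[], hv ▸ Path.nil _, by simp⟩
    by_cases hmem : G.src e ∈ q.map G.src
    · obtain ⟨f, hfq, hf⟩ := List.mem_map.1 hmem
      obtain ⟨q₁, q₂, rfl⟩ := List.append_of_mem hfq
      obtain ⟨x, -, hx⟩ := Path.append_iff.1 hq
      exact ⟨f :: q₂, hf ▸ (Path.cons_iff.1 hx).1 ▸ hx,
        hnd.sublist (((List.sublist_append_right q₁ _).map G.src).cons_cons v)⟩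
    · refine ⟨e :: q, hq.cons e, ?_⟩
      simp only [List.map_cons, List.nodup_cons, List.mem_cons, not_or] at hnd ⊢
      exact ⟨⟨Ne.symm hv, hnd.1⟩, hmem, hnd.2⟩

theorem Path.src_mem (h : G.Path u v p) (hp : p ≠ []) : u ∈ p.map G.src := by
  obtain _ | ⟨e, p⟩ := p
  · exact absurd rfl hp
  · exact (Path.cons_iff.1 h).1 ▸ List.mem_cons_self ..

theorem Path.flatten_replicate (h : G.Path u u p) (k : ℕ) :
    G.Path u u (List.replicate k p).flatten := by
  induction k with
  | zero => exact Path.nil u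
  | succ k ih => simpa [List.replicate_succ] using h.append ih

theorem IsCycleAt.eq_of_prefix {c₁ c₂ : List G.E} (h₁ : G.IsCycleAt w c₁)
    (h₂ : G.IsCycleAt w c₂) (hpre : c₁ <+: c₂) : c₁ = c₂ := by
  obtain ⟨r, rfl⟩ := hpre
  obtain ⟨v, hv, hr⟩ := Path.append_iff.1 h₂.2.1
  obtain rfl := h₁.2.1.target_unique hv
  by_contra hne
  have hr₀ : r ≠ [] := fun hr₀ => hne (by simp [hr₀])
  have hnd := h₂.2.2
  rw [List.map_append] at hnd
  exact List.disjoint_of_nodup_append hnd (h₁.2.1.src_mem h₁.1) (hr.src_mem hr₀)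

def PairwiseDisjointCycles (G : DMGraph) : Prop :=
  ∀ (w : G.V) (c₁ c₂ : List G.E), G.IsCycleAt w c₁ → G.IsCycleAt w c₂ → c₁ = c₂

def IsCycleEdge (G : DMGraph) (e : G.E) : Prop := ∃ p, G.IsCycleAt (G.src e) (e :: p)

theorem isCycleEdge_of_path (h : G.Path (G.tgt e) (G.src e) p) : G.IsCycleEdge e := by
  obtain ⟨q, hq, hnd⟩ := h.exists_nodup
  exact ⟨q, List.cons_ne_nil _ _, hq.cons e, by simpa using hnd⟩

theorem Path.notMem_of_not_isCycleEdge (h : G.Path u v (e :: p)) (he : ¬ G.IsCycleEdge e) :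
    e ∉ p := by
  intro hep
  obtain ⟨p₁, p₂, rfl⟩ := List.append_of_mem hep
  obtain ⟨x, hp₁, hx⟩ := Path.append_iff.1 (Path.cons_iff.1 h).2
  exact he (isCycleEdge_of_path ((Path.cons_iff.1 hx).1 ▸ hp₁))

theorem PairwiseDisjointCycles.eq_of_isCycleEdge (hG : G.PairwiseDisjointCycles)
    (he : G.IsCycleEdge e) (hf : G.IsCycleEdge f) (h : G.src e = G.src f) : e = f := by
  obtain ⟨p, hp⟩ := he
  obtain ⟨q, hq⟩ := hf
  exact List.head_eq_of_cons_eq (hG _ _ _ hp (h ▸ hq))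

open Classical in
noncomputable def stepsAfter (G : DMGraph) : List G.E → G.E → Option ℕ
  | [], _ => none
  | e :: p, f => if f = e ∧ ¬ G.IsCycleEdge e then some p.length else G.stepsAfter p f

theorem stepsAfter_lt {t : ℕ} (h : G.stepsAfter p f = some t) : t < p.length := by
  induction p with
  | nil => simp [stepsAfter] at h
  | cons e p ih =>
    rw [stepsAfter] at h
    split_ifs at h
    · simp_all
    · exact (ih h).trans (Nat.lt_succ_self _)

theorem stepsAfter_eq_none_of_notMem (h : f ∉ p) : G.stepsAfter p f = none := by
  induction p with
  | nil => rfl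
  | cons e p ih =>
    rw [List.mem_cons, not_or] at h
    simp [stepsAfter, h.1, ih h.2]

theorem stepsAfter_cons_eq_some_length_iff :
    G.stepsAfter (e :: p) f = some p.length ↔ f = e ∧ ¬ G.IsCycleEdge e := by
  rw [stepsAfter]
  split_ifs with h
  · simpa using h
  · exact iff_of_false (fun h' => (stepsAfter_lt h').false) h

theorem eq_of_stepsAfter_cons_eq (hlen : p.length = q.length)
    (h : G.stepsAfter (e :: p) = G.stepsAfter (f :: q)) (he : ¬ G.IsCycleEdge e) : e = f := by
  have := congrFun h e
  rw [stepsAfter_cons_eq_some_length_iff.2 ⟨rfl, he⟩, hlen, eq_comm,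
    stepsAfter_cons_eq_some_length_iff] at this
  exact this.1

-- A step that does not traverse an edge lying on no cycle must take the unique cycle edge out
-- of the current vertex.
theorem PairwiseDisjointCycles.eq_of_stepsAfter_eq (hG : G.PairwiseDisjointCycles)
    {j₁ j₂ : G.V} {p₁ p₂ : List G.E} (h₁ : G.Path u j₁ p₁) (h₂ : G.Path u j₂ p₂)
    (hlen : p₁.length = p₂.length) (h : G.stepsAfter p₁ = G.stepsAfter p₂) : p₁ = p₂ := by
  induction p₁ generalizing u p₂ with
  | nil => exact (List.length_eq_zero_iff.1 hlen.symm).symm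
  | cons e q₁ ih =>
    obtain _ | ⟨f, q₂⟩ := p₂
    · simp at hlen
    obtain ⟨hu₁, hq₁⟩ := Path.cons_iff.1 h₁
    obtain ⟨hu₂, hq₂⟩ := Path.cons_iff.1 h₂
    have hlen' : q₁.length = q₂.length := Nat.succ_injective hlen
    have hef : e = f := by
      by_cases he : G.IsCycleEdge e
      · by_cases hf : G.IsCycleEdge f
        · exact hG.eq_of_isCycleEdge he hf (hu₁.trans hu₂.symm)
        · exact (eq_of_stepsAfter_cons_eq hlen'.symm h.symm hf).symm
      · exact eq_of_stepsAfter_cons_eq hlen' h he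
    subst hef
    refine congrArg (e :: ·) (ih hq₁ hq₂ hlen' (funext fun x => ?_))
    have hx := congrFun h x
    by_cases hxe : x = e ∧ ¬ G.IsCycleEdge e
    · rw [hxe.1, stepsAfter_eq_none_of_notMem (h₁.notMem_of_not_isCycleEdge hxe.2),
        stepsAfter_eq_none_of_notMem (h₂.notMem_of_not_isCycleEdge hxe.2)]
    · simpa [stepsAfter, hxe] using hx

section Walks

variable (G) [DecidableEq G.V] [DecidableEq G.E]

def walks : ℕ → G.V → G.V → Finset (List G.E)
  | 0, i, j => if i = j then {[]} else ∅
  | n + 1, i, j =>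
    ({e | G.src e = i} : Finset G.E).biUnion fun e => (walks n (G.tgt e) j).image (e :: ·)

def adjMatrix : Matrix G.V G.V ℕ := fun i j => #{e | G.src e = i ∧ G.tgt e = j}

variable {G}

theorem mem_walks {n : ℕ} {i j : G.V} : p ∈ G.walks n i j ↔ p.length = n ∧ G.Path i j p := by
  induction n generalizing i p with
  | zero => cases p <;> by_cases hij : i = j <;> simp [walks, hij, Path.nil_iff]
  | succ n ih =>
    cases p with
    | nil => simp [walks]
    | cons e p => simp [walks, ih, Path.cons_iff, and_left_comm]

theorem card_walks (n : ℕ) (i j : G.V) : #(G.walks n i j) = (G.adjMatrix ^ n) i j := by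
  induction n generalizing i with
  | zero => by_cases hij : i = j <;> simp [walks, hij]
  | succ n ih =>
    rw [walks, card_biUnion, pow_succ', Matrix.mul_apply]
    · simp_rw [card_image_of_injective _ List.cons_injective, ih]
      rw [← sum_fiberwise _ G.tgt]
      refine sum_congr rfl fun k _ => ?_
      rw [sum_congr rfl fun e he => by rw [(mem_filter.1 he).2], sum_const, smul_eq_mul,
        filter_filter, adjMatrix]
    · intro e _ f _ hef
      simp only [Function.onFun, disjoint_left, mem_image]
      rintro _ ⟨p, -, rfl⟩ ⟨q, -, h⟩
      exact hef (List.head_eq_of_cons_eq h).symm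

theorem PairwiseDisjointCycles.card_walks_le (hG : G.PairwiseDisjointCycles) (n : ℕ)
    (i j : G.V) : #(G.walks n i j) ≤ (n + 1) ^ Fintype.card G.E := by
  classical
  calc #(G.walks n i j) ≤ #(Fintype.piFinset fun _ : G.E => (range n).insertNone) := by
        refine card_le_card_of_injOn G.stepsAfter (fun p hp => ?_) (fun p₁ hp₁ p₂ hp₂ h => ?_)
        · simp only [mem_coe, Fintype.mem_piFinset, mem_insertNone, mem_range, Option.mem_def]
          exact fun f t ht => (mem_walks.1 hp).1 ▸ stepsAfter_lt ht
        · rw [mem_coe, mem_walks] at hp₁ hp₂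
          exact hG.eq_of_stepsAfter_eq hp₁.2 hp₂.2 (hp₁.1.trans hp₂.1.symm) h
    _ = (n + 1) ^ Fintype.card G.E := by simp

theorem exists_one_lt_card_walks_of_not_pairwiseDisjointCycles (hG : ¬ G.PairwiseDisjointCycles) :
    ∃ w m, 0 < m ∧ 1 < #(G.walks m w w) := by
  simp only [PairwiseDisjointCycles, not_forall] at hG
  obtain ⟨w, c₁, c₂, h₁, h₂, hne⟩ := hG
  have hlen : ∀ {c}, G.IsCycleAt w c → 0 < c.length := fun h => List.length_pos_iff.2 h.1
  -- both `c₁` repeated `|c₂|` times and `c₂` repeated `|c₁|` times are closed walks of length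
  -- `|c₁| |c₂|`; they differ since otherwise one of `c₁`, `c₂` would be a prefix of the other
  have hmem : ∀ {c : List G.E} (c' : List G.E), G.IsCycleAt w c →
      (List.replicate c'.length c).flatten ∈ G.walks (c.length * c'.length) w w := fun c' h =>
    mem_walks.2 ⟨by simp [List.length_flatten, mul_comm], h.2.1.flatten_replicate _⟩
  have hpre : ∀ {c c' : List G.E}, G.IsCycleAt w c' →
      c <+: (List.replicate c'.length c).flatten := fun h => by
    obtain ⟨k, hk⟩ := Nat.exists_eq_succ_of_ne_zero (hlen h).ne'
    rw [hk, List.replicate_succ, List.flatten_cons]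
    exact List.prefix_append _ _
  refine ⟨w, _, Nat.mul_pos (hlen h₁) (hlen h₂),
    one_lt_card.2 ⟨_, hmem c₂ h₁, _, mul_comm c₂.length _ ▸ hmem c₁ h₂, fun h => ?_⟩⟩
  rcases List.prefix_or_prefix_of_prefix (hpre h₂) (h ▸ hpre h₁) with h' | h'
  · exact hne (h₁.eq_of_prefix h₂ h')
  · exact hne (h₂.eq_of_prefix h₁ h').symm

end Walks

end DMGraph

theorem isBigO_natCast_of_le_succ_pow {f : ℕ → ℕ} {d : ℕ} (h : ∀ n, f n ≤ (n + 1) ^ d) :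
    (fun n => (f n : ℝ)) =O[atTop] fun n => (n : ℝ) ^ d := by
  have hsucc : (fun n : ℕ => (n : ℝ) + 1) =O[atTop] fun n => (n : ℝ) := by
    refine IsBigO.of_bound 2 ?_
    filter_upwards [eventually_ge_atTop 1] with n hn
    have hn : (1 : ℝ) ≤ n := by exact_mod_cast hn
    rw [Real.norm_of_nonneg (by positivity), Real.norm_of_nonneg (by positivity)]
    linarith
  refine (IsBigO.of_bound 1 (Eventually.of_forall fun n => ?_)).trans (hsucc.pow d)
  rw [one_mul, Real.norm_natCast, norm_pow, Real.norm_of_nonneg (by positivity)]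
  exact_mod_cast h n

theorem norm_le_one_of_isBigO_pow {𝕜 : Type*} [NormedField 𝕜] {μ : 𝕜} {d : ℕ}
    (h : (fun n : ℕ => μ ^ n) =O[atTop] fun n => (n : ℝ) ^ d) : ‖μ‖ ≤ 1 := by
  by_contra! hμ
  have hlittle :=
    isLittleO_norm_left.2 (h.trans_isLittleO (isLittleO_pow_const_const_pow_of_one_lt d hμ))
  simp only [norm_pow] at hlittle
  exact isLittleO_irrefl (Frequently.of_forall fun n => pow_ne_zero n (by positivity)) hlittle

theorem spectrum.exists_le_norm_of_pow_le_norm_pow {A : Type*} [NormedRing A] [NormedAlgebra ℂ A]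
    [CompleteSpace A] (a : A) {c : ℝ} (hc : 0 ≤ c) (h : ∀ n : ℕ, c ^ n ≤ ‖a ^ n‖) :
    ∃ z ∈ spectrum ℂ a, c ≤ ‖z‖ := by
  have : Nontrivial A := nontrivial_of_ne 1 0 fun h1 => absurd (h 0) (by simp [h1])
  have hρ : ENNReal.ofReal c ≤ spectralRadius ℂ a := by
    refine ge_of_tendsto (spectrum.pow_norm_pow_one_div_tendsto_nhds_spectralRadius a) ?_
    filter_upwards [eventually_ne_atTop 0] with n hn
    refine ENNReal.ofReal_le_ofReal ?_
    calc c = (c ^ n) ^ (1 / n : ℝ) := by rw [one_div, Real.pow_rpow_inv_natCast hc hn]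
      _ ≤ ‖a ^ n‖ ^ (1 / n : ℝ) := by gcongr; exact h n
  obtain ⟨z, hz, hzρ⟩ := spectrum.exists_nnnorm_eq_spectralRadius a
  refine ⟨z, hz, (ENNReal.ofReal_le_ofReal_iff (norm_nonneg z)).1 ?_⟩
  rw [ofReal_norm, enorm_eq_nnnorm, hzρ]
  exact hρ

namespace Matrix

variable {n : Type*} [Fintype n] [DecidableEq n]

theorem map_natCast_pow {R : Type*} [Semiring R] (B : Matrix n n ℕ) (k : ℕ) :
    (B ^ k).map (Nat.cast : ℕ → R) = B.map Nat.cast ^ k :=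
  Matrix.map_pow B (Nat.castRingHom R) k

theorem pow_apply_self_le_apply_pow (B : Matrix n n ℕ) (w : n) (k : ℕ) :
    B w w ^ k ≤ (B ^ k) w w := by
  induction k with
  | zero => simp
  | succ k ih =>
    rw [pow_succ, pow_succ, mul_apply]
    exact (Nat.mul_le_mul_right _ ih).trans
      (single_le_sum (f := fun j => (B ^ k) w j * B j w) (fun _ _ => Nat.zero_le _) (mem_univ w))

theorem exists_mem_spectrum_apply_self_le_norm (B : Matrix n n ℕ) (w : n) :
    ∃ μ ∈ spectrum ℂ (B.map (Nat.cast : ℕ → ℂ)), (B w w : ℝ) ≤ ‖μ‖ := by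
  let _ := Matrix.linftyOpNormedRing (n := n) (α := ℂ)
  let _ := Matrix.linftyOpNormedAlgebra (n := n) (R := ℂ) (α := ℂ)
  refine spectrum.exists_le_norm_of_pow_le_norm_pow _ (Nat.cast_nonneg _) fun k => ?_
  set M := B.map (Nat.cast : ℕ → ℂ)
  calc (B w w : ℝ) ^ k ≤ ‖(M ^ k) w w‖ := by
        rw [← map_natCast_pow, map_apply, Complex.norm_natCast]
        exact_mod_cast pow_apply_self_le_apply_pow B w k
    _ = ‖(M ^ k *ᵥ Pi.single w 1) w‖ := by rw [mulVec_single_one, col_apply]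
    _ ≤ ‖M ^ k *ᵥ Pi.single w 1‖ := norm_le_pi_norm _ w
    _ ≤ ‖M ^ k‖ := by
        simpa [Pi.norm_single] using linfty_opNorm_mulVec (M ^ k) (Pi.single w (1 : ℂ))

theorem norm_le_one_of_isBigO_pow_apply (M : Matrix n n ℂ) {d : ℕ}
    (hM : ∀ i j, (fun k : ℕ => (M ^ k) i j) =O[atTop] fun k => (k : ℝ) ^ d) {μ : ℂ}
    (hμ : μ ∈ spectrum ℂ M) : ‖μ‖ ≤ 1 := by
  rw [← spectrum_toLin', ← Module.End.hasEigenvalue_iff_mem_spectrum] at hμ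
  obtain ⟨v, hv⟩ := hμ.exists_hasEigenvector
  obtain ⟨i, hi⟩ := Function.ne_iff.1 hv.2
  have hcoord : ∀ k : ℕ, μ ^ k = (v i)⁻¹ * ∑ j, v j * (M ^ k) i j := fun k => by
    have := congrFun (hv.pow_apply k) i
    rw [← toLin'_pow, toLin'_apply, Pi.smul_apply, smul_eq_mul] at this
    rw [eq_inv_mul_iff_mul_eq₀ hi, mul_comm, ← this]
    exact sum_congr rfl fun j _ => mul_comm _ _
  refine norm_le_one_of_isBigO_pow (d := d) ?_
  simp_rw [hcoord]
  exact (IsBigO.fun_sum fun j _ => (hM i j).const_mul_left (v j)).const_mul_left _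

def HasPolynomialGrowth (A : Matrix n n ℕ) : Prop :=
  ∃ d : ℕ, ∀ i j, (fun k : ℕ => ((A ^ k) i j : ℝ)) =O[atTop] fun k : ℕ => (k : ℝ) ^ d

theorem HasPolynomialGrowth.norm_le_one {A : Matrix n n ℕ} (hA : A.HasPolynomialGrowth) :
    ∀ μ ∈ spectrum ℂ (A.map (Nat.cast : ℕ → ℂ)), ‖μ‖ ≤ 1 := by
  obtain ⟨d, hd⟩ := hA
  refine fun μ => norm_le_one_of_isBigO_pow_apply _ (d := d) fun i j => IsBigO.of_norm_left ?_
  simpa only [← map_natCast_pow, map_apply, Complex.norm_natCast] using hd i j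

end Matrix

theorem card_filter_fst_eq_snd_fst_eq {ι : Type*} [Fintype ι] [DecidableEq ι] (f : ι → ι → ℕ)
    (i j : ι) : #{e : Σ a b, Fin (f a b) | e.1 = i ∧ e.2.1 = j} = f i j := by
  refine (card_bij (fun x _ => ⟨i, j, x⟩) (fun x _ => by simp) (fun x _ y _ h => by simpa using h)
    ?_).symm.trans (card_fin (f i j))
  rintro ⟨a, b, x⟩ he
  obtain ⟨rfl, rfl⟩ := (mem_filter.1 he).2
  exact ⟨x, mem_univ x, rfl⟩

section graphOf

variable {N : ℕ} (A : Matrix (Fin N) (Fin N) ℕ)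

instance : DecidableEq (graphOf A).V := inferInstanceAs (DecidableEq (Fin N))

theorem adjMatrix_graphOf : (graphOf A).adjMatrix = A :=
  Matrix.ext (card_filter_fst_eq_snd_fst_eq A)

theorem card_walks_graphOf [DecidableEq (graphOf A).E] (n : ℕ) (i j : (graphOf A).V) :
    #((graphOf A).walks n i j) = (A ^ n) i j := by
  rw [DMGraph.card_walks, adjMatrix_graphOf]
  rfl

theorem hasPolynomialGrowth_of_pairwiseDisjointCycles (hG : (graphOf A).PairwiseDisjointCycles) :
    A.HasPolynomialGrowth := by
  classical
  exact ⟨_, fun i j => isBigO_natCast_of_le_succ_pow fun n =>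
    card_walks_graphOf A n i j ▸ hG.card_walks_le n i j⟩

theorem pairwiseDisjointCycles_of_forall_norm_le_one
    (hA : ∀ μ ∈ spectrum ℂ (A.map (Nat.cast : ℕ → ℂ)), ‖μ‖ ≤ 1) :
    (graphOf A).PairwiseDisjointCycles := by
  classical
  by_contra hG
  obtain ⟨w, m, hm, h2⟩ := DMGraph.exists_one_lt_card_walks_of_not_pairwiseDisjointCycles hG
  rw [card_walks_graphOf] at h2
  obtain ⟨μ, hμ, hμ2⟩ := (A ^ m).exists_mem_spectrum_apply_self_le_norm w
  rw [Matrix.map_natCast_pow, spectrum.map_pow_of_pos _ hm] at hμ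
  obtain ⟨ν, hν, rfl⟩ := hμ
  have h2 : (2 : ℝ) ≤ (A ^ m) w w := by exact_mod_cast h2
  rw [norm_pow] at hμ2
  linarith [pow_le_one₀ (norm_nonneg ν) (hA ν hν) (n := m)]

end graphOf

/-- For an `N × N` non-negative integer matrix `A` and the directed
multigraph `D = graphOf A` with `A i j` edges from `i` to `j`, the following are
equivalent: (a) the cycles of `D` are pairwise vertex-disjoint; (b) all entries
`(A ^ n) i j` are `O(n ^ d)` for some non-negative integer `d`; (c) every complex
eigenvalue of `A` has absolute value at most `1`. -/
theorem stmt7 {N : ℕ} (A : Matrix (Fin N) (Fin N) ℕ) :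
    ((∀ (w : (graphOf A).V) (c₁ c₂ : List (graphOf A).E),
        (graphOf A).IsCycleAt w c₁ → (graphOf A).IsCycleAt w c₂ → c₁ = c₂)
      ↔ (∃ d : ℕ, ∀ i j : Fin N,
          (fun n : ℕ => ((A ^ n) i j : ℝ)) =O[Filter.atTop] fun n : ℕ => (n : ℝ) ^ d))
    ∧
    ((∃ d : ℕ, ∀ i j : Fin N,
        (fun n : ℕ => ((A ^ n) i j : ℝ)) =O[Filter.atTop] fun n : ℕ => (n : ℝ) ^ d)
      ↔ (∀ μ ∈ spectrum ℂ (A.map (Nat.cast : ℕ → ℂ)), ‖μ‖ ≤ 1)) :=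
  have hab := hasPolynomialGrowth_of_pairwiseDisjointCycles A
  have hbc := Matrix.HasPolynomialGrowth.norm_le_one (A := A)
  have hca := pairwiseDisjointCycles_of_forall_norm_le_one A
  ⟨⟨hab, hca ∘ hbc⟩, ⟨hbc, hab ∘ hca⟩⟩
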